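/- arXiv:2408.11808 — 4 statements merged into one kernel-verified Lean document; each statement's English description precedes it below -/
import Mathlib

section
/- Let μ be a probability measure on ℝ^{p+q}, φ(s,t) = ∫ exp(i(sᵀx + tᵀy)) dμ(x,y), φ_X(s) = φ(s,0), φ_Y(t) = φ(0,t), u(s,x) = exp(i sᵀx) - a(s), v(t,y) = exp(i tᵀy) - b(t) for any complex-valued functions a, b. Then |φ(s,t) - φ_X(s)φ_Y(t)|² ≤ 4 (∫ |u(s,x)|² dμ(x,y)) (∫ |v(t,y)|² dμ(x,y)). -/
open MeasureTheory Complex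

section Aux

variable {α : Type*} [MeasurableSpace α] {μ : Measure α} [IsProbabilityMeasure μ]

private lemma rpow_two_eq (x : ℝ) : x ^ (2:ℝ) = x ^ 2 := by
  rw [show ((2:ℝ)) = ((2:ℕ):ℝ) by norm_num, Real.rpow_natCast]

private lemma cs_aux {f g : α → ℂ} (hf : MemLp f (ENNReal.ofReal 2) μ)
    (hg : MemLp g (ENNReal.ofReal 2) μ) :
    ∫ z, ‖f z‖ * ‖g z‖ ∂μ ≤
      Real.sqrt (∫ z, ‖f z‖ ^ 2 ∂μ) * Real.sqrt (∫ z, ‖g z‖ ^ 2 ∂μ) := by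
  have h22 : Real.HolderConjugate 2 2 := Real.HolderConjugate.two_two
  have h := integral_mul_norm_le_Lp_mul_Lq (μ := μ) h22 hf hg
  simp_rw [rpow_two_eq] at h
  calc ∫ z, ‖f z‖ * ‖g z‖ ∂μ ≤
      (∫ z, ‖f z‖ ^ 2 ∂μ) ^ (1/(2:ℝ)) * (∫ z, ‖g z‖ ^ 2 ∂μ) ^ (1/(2:ℝ)) := h
    _ = Real.sqrt (∫ z, ‖f z‖ ^ 2 ∂μ) * Real.sqrt (∫ z, ‖g z‖ ^ 2 ∂μ) := by
        rw [Real.sqrt_eq_rpow, Real.sqrt_eq_rpow]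

end Aux

set_option maxHeartbeats 1000000 in
/-- For a probability measure `μ` on `ℝ^p × ℝ^q` with joint characteristic function `φ`,
and `u(s,x) = exp(i sᵀx) - a(s)`, `v(t,y) = exp(i tᵀy) - b(t)` for arbitrary `a, b`,
`|φ(s,t) - φ(s,0)φ(0,t)|² ≤ 4 (∫ |u|² dμ)(∫ |v|² dμ)`. -/
theorem stmt_5 {p q : ℕ}
    (μ : Measure (EuclideanSpace ℝ (Fin p) × EuclideanSpace ℝ (Fin q)))
    [IsProbabilityMeasure μ]
    (a : EuclideanSpace ℝ (Fin p) → ℂ) (b : EuclideanSpace ℝ (Fin q) → ℂ)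
    (φ : EuclideanSpace ℝ (Fin p) → EuclideanSpace ℝ (Fin q) → ℂ)
    (hφ : ∀ s t, φ s t =
      ∫ z, Complex.exp (Complex.I * ((((inner ℝ s z.1 : ℝ) + (inner ℝ t z.2 : ℝ)) : ℝ) : ℂ)) ∂μ)
    (s : EuclideanSpace ℝ (Fin p)) (t : EuclideanSpace ℝ (Fin q)) :
    ‖φ s t - φ s 0 * φ 0 t‖ ^ 2 ≤
      4 * (∫ z, ‖Complex.exp (Complex.I * ((inner ℝ s z.1 : ℝ) : ℂ)) - a s‖ ^ 2 ∂μ) *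
        (∫ z, ‖Complex.exp (Complex.I * ((inner ℝ t z.2 : ℝ) : ℂ)) - b t‖ ^ 2 ∂μ) := by
  set A := a s with hA
  set B := b t with hB
  set f : (EuclideanSpace ℝ (Fin p) × EuclideanSpace ℝ (Fin q)) → ℂ :=
    fun z => Complex.exp (Complex.I * ((inner ℝ s z.1 : ℝ) : ℂ)) - A with hf
  set g : (EuclideanSpace ℝ (Fin p) × EuclideanSpace ℝ (Fin q)) → ℂ :=
    fun z => Complex.exp (Complex.I * ((inner ℝ t z.2 : ℝ) : ℂ)) - B with hg
  -- norm of the exponentials is 1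
  have hexp : ∀ r : ℝ, ‖Complex.exp (Complex.I * (r:ℂ))‖ = 1 := fun r => by
    rw [mul_comm]
    simpa using Complex.norm_exp_ofReal_mul_I r
  -- continuity
  have hcont1 : Continuous fun z : EuclideanSpace ℝ (Fin p) × EuclideanSpace ℝ (Fin q) =>
      Complex.exp (Complex.I * ((inner ℝ s z.1 : ℝ) : ℂ)) :=
    Complex.continuous_exp.comp (continuous_const.mul
      (Complex.continuous_ofReal.comp (continuous_const.inner continuous_fst)))
  have hcont2 : Continuous fun z : EuclideanSpace ℝ (Fin p) × EuclideanSpace ℝ (Fin q) =>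
      Complex.exp (Complex.I * ((inner ℝ t z.2 : ℝ) : ℂ)) :=
    Complex.continuous_exp.comp (continuous_const.mul
      (Complex.continuous_ofReal.comp (continuous_const.inner continuous_snd)))
  have hfc : Continuous f := hcont1.sub continuous_const
  have hgc : Continuous g := hcont2.sub continuous_const
  -- bounds
  have hfb : ∀ z, ‖f z‖ ≤ 1 + ‖A‖ := fun z => by
    calc ‖f z‖ ≤ ‖Complex.exp (Complex.I * ((inner ℝ s z.1 : ℝ) : ℂ))‖ + ‖A‖ := norm_sub_le _ _
      _ = 1 + ‖A‖ := by rw [hexp]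
  have hgb : ∀ z, ‖g z‖ ≤ 1 + ‖B‖ := fun z => by
    calc ‖g z‖ ≤ ‖Complex.exp (Complex.I * ((inner ℝ t z.2 : ℝ) : ℂ))‖ + ‖B‖ := norm_sub_le _ _
      _ = 1 + ‖B‖ := by rw [hexp]
  -- integrability
  have hfint : Integrable f μ :=
    (integrable_const (1 + ‖A‖)).mono' hfc.aestronglyMeasurable
      (Filter.Eventually.of_forall hfb)
  have hgint : Integrable g μ :=
    (integrable_const (1 + ‖B‖)).mono' hgc.aestronglyMeasurable
      (Filter.Eventually.of_forall hgb)
  have hfgint : Integrable (fun z => f z * g z) μ :=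
    (integrable_const ((1 + ‖A‖) * (1 + ‖B‖))).mono' (hfc.mul hgc).aestronglyMeasurable
      (Filter.Eventually.of_forall fun z => by
        rw [norm_mul]
        exact mul_le_mul (hfb z) (hgb z) (norm_nonneg _) (by positivity))
  have hfL2 : MemLp f (ENNReal.ofReal 2) μ :=
    MemLp.of_bound hfc.aestronglyMeasurable (1 + ‖A‖) (Filter.Eventually.of_forall hfb)
  have hgL2 : MemLp g (ENNReal.ofReal 2) μ :=
    MemLp.of_bound hgc.aestronglyMeasurable (1 + ‖B‖) (Filter.Eventually.of_forall hgb)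
  have h1L2 : MemLp (fun _ : EuclideanSpace ℝ (Fin p) × EuclideanSpace ℝ (Fin q) => (1:ℂ))
      (ENNReal.ofReal 2) μ := memLp_const 1
  set E := ∫ z, f z ∂μ with hE
  set F := ∫ z, g z ∂μ with hF
  set G := ∫ z, f z * g z ∂μ with hG
  -- decomposition of φ s t
  have h1 : φ s t = G + B * E + A * F + A * B := by
    rw [hφ]
    have key : ∀ z : EuclideanSpace ℝ (Fin p) × EuclideanSpace ℝ (Fin q),
        Complex.exp (Complex.I * ((((inner ℝ s z.1 : ℝ) + (inner ℝ t z.2 : ℝ)) : ℝ) : ℂ)) =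
          f z * g z + B * f z + A * g z + A * B := by
      intro z
      have hsplit : Complex.exp (Complex.I * ((((inner ℝ s z.1 : ℝ) + (inner ℝ t z.2 : ℝ)) : ℝ) : ℂ)) =
          Complex.exp (Complex.I * ((inner ℝ s z.1 : ℝ) : ℂ)) *
            Complex.exp (Complex.I * ((inner ℝ t z.2 : ℝ) : ℂ)) := by
        rw [← Complex.exp_add]
        push_cast
        ring_nf
      rw [hsplit]
      simp only [hf, hg]
      ring
    simp_rw [key]
    rw [integral_add, integral_add, integral_add, integral_const_mul, integral_const_mul,
      integral_const]
    · simp [hE, hF, hG]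
    all_goals
      first
      | exact hfgint
      | exact hfint.const_mul B
      | exact hgint.const_mul A
      | exact integrable_const _
      | exact hfgint.add (hfint.const_mul B)
      | exact (hfgint.add (hfint.const_mul B)).add (hgint.const_mul A)
  have h2 : φ s 0 = E + A := by
    rw [hφ]
    have key : ∀ z : EuclideanSpace ℝ (Fin p) × EuclideanSpace ℝ (Fin q),
        Complex.exp (Complex.I *
          ((((inner ℝ s z.1 : ℝ) + (inner ℝ (0 : EuclideanSpace ℝ (Fin q)) z.2 : ℝ)) : ℝ) : ℂ)) =
          f z + A := by
      intro z
      have h0 : (inner ℝ (0 : EuclideanSpace ℝ (Fin q)) z.2 : ℝ) = 0 := inner_zero_left _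
      rw [h0, add_zero]
      simp only [hf]
      ring
    simp_rw [key]
    rw [integral_add hfint (integrable_const A), integral_const]
    simp [hE]
  have h3 : φ 0 t = F + B := by
    rw [hφ]
    have key : ∀ z : EuclideanSpace ℝ (Fin p) × EuclideanSpace ℝ (Fin q),
        Complex.exp (Complex.I *
          ((((inner ℝ (0 : EuclideanSpace ℝ (Fin p)) z.1 : ℝ) + (inner ℝ t z.2 : ℝ)) : ℝ) : ℂ)) =
          g z + B := by
      intro z
      have h0 : (inner ℝ (0 : EuclideanSpace ℝ (Fin p)) z.1 : ℝ) = 0 := inner_zero_left _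
      rw [h0, zero_add]
      simp only [hg]
      ring
    simp_rw [key]
    rw [integral_add hgint (integrable_const B), integral_const]
    simp [hF]
  have hdiff : φ s t - φ s 0 * φ 0 t = G - E * F := by
    rw [h1, h2, h3]; ring
  -- the quantities on the right
  set Mf := ∫ z, ‖f z‖ ^ 2 ∂μ with hMf
  set Mg := ∫ z, ‖g z‖ ^ 2 ∂μ with hMg
  have hMf0 : 0 ≤ Mf := integral_nonneg fun z => by positivity
  have hMg0 : 0 ≤ Mg := integral_nonneg fun z => by positivity
  -- Cauchy-Schwarz bounds
  have hGb : ‖G‖ ≤ Real.sqrt Mf * Real.sqrt Mg := by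
    calc ‖G‖ ≤ ∫ z, ‖f z * g z‖ ∂μ := norm_integral_le_integral_norm _
      _ = ∫ z, ‖f z‖ * ‖g z‖ ∂μ := by simp_rw [norm_mul]
      _ ≤ Real.sqrt Mf * Real.sqrt Mg := cs_aux hfL2 hgL2
  have hone : Real.sqrt (∫ _z : EuclideanSpace ℝ (Fin p) × EuclideanSpace ℝ (Fin q),
      ‖(1:ℂ)‖ ^ 2 ∂μ) = 1 := by
    simp only [norm_one, one_pow, integral_const, probReal_univ, ENNReal.toReal_one, smul_eq_mul,
      mul_one]
    exact Real.sqrt_one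
  have hEb : ‖E‖ ≤ Real.sqrt Mf := by
    calc ‖E‖ ≤ ∫ z, ‖f z‖ ∂μ := norm_integral_le_integral_norm _
      _ = ∫ z, ‖f z‖ * ‖(1:ℂ)‖ ∂μ := by simp_rw [norm_one, mul_one]
      _ ≤ Real.sqrt Mf * Real.sqrt (∫ _z, ‖(1:ℂ)‖ ^ 2 ∂μ) := cs_aux hfL2 h1L2
      _ = Real.sqrt Mf := by rw [hone, mul_one]
  have hFb : ‖F‖ ≤ Real.sqrt Mg := by
    calc ‖F‖ ≤ ∫ z, ‖g z‖ ∂μ := norm_integral_le_integral_norm _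
      _ = ∫ z, ‖g z‖ * ‖(1:ℂ)‖ ∂μ := by simp_rw [norm_one, mul_one]
      _ ≤ Real.sqrt Mg * Real.sqrt (∫ _z, ‖(1:ℂ)‖ ^ 2 ∂μ) := cs_aux hgL2 h1L2
      _ = Real.sqrt Mg := by rw [hone, mul_one]
  have key : ‖φ s t - φ s 0 * φ 0 t‖ ≤ 2 * (Real.sqrt Mf * Real.sqrt Mg) := by
    rw [hdiff]
    calc ‖G - E * F‖ ≤ ‖G‖ + ‖E * F‖ := norm_sub_le _ _
      _ = ‖G‖ + ‖E‖ * ‖F‖ := by rw [norm_mul]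
      _ ≤ Real.sqrt Mf * Real.sqrt Mg + Real.sqrt Mf * Real.sqrt Mg := by
          gcongr
      _ = 2 * (Real.sqrt Mf * Real.sqrt Mg) := by ring
  have habs : ‖φ s t - φ s 0 * φ 0 t‖ = ‖φ s t - φ s 0 * φ 0 t‖ :=
    rfl
  have hrhs1 : (∫ z, ‖Complex.exp (Complex.I * ((inner ℝ s z.1 : ℝ) : ℂ)) - A‖ ^ 2 ∂μ)
      = Mf := by
    rw [hMf]
  have hrhs2 : (∫ z, ‖Complex.exp (Complex.I * ((inner ℝ t z.2 : ℝ) : ℂ)) - B‖ ^ 2 ∂μ)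
      = Mg := by
    rw [hMg]
  rw [habs]
  calc ‖φ s t - φ s 0 * φ 0 t‖ ^ 2 ≤ (2 * (Real.sqrt Mf * Real.sqrt Mg)) ^ 2 := by
        gcongr
    _ = 4 * (Real.sqrt Mf ^ 2) * (Real.sqrt Mg ^ 2) := by ring
    _ = 4 * Mf * Mg := by rw [Real.sq_sqrt hMf0, Real.sq_sqrt hMg0]
end

section
/- Let (X,Y), (X',Y'), (X'',Y''), (X''',Y''') be i.i.d. random vectors in ℝ^p × ℝ^q. Let f: ℝ^{2p} → [0,∞) and g: ℝ^{2q} → [0,∞) be symmetric measurable functions (f(x,x') = f(x',x), g(y,y') = g(y',y)), and h: ℝ^{p+q} → [0,∞) measurable. Assume X and Y are independent and all expectations below are finite. Then E[f(X,X')(g(Y,Y') + g(Y'',Y'''))(h(X,Y) + h(X',Y') + h(X'',Y'') + h(X''',Y'''))] = 2 E[f(X,X') g(Y,Y'') (h(X,Y) + h(X',Y') + h(X'',Y'') + h(X''',Y'''))]. -/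
open MeasureTheory ENNReal

section Aux
variable {α β : Type*} [MeasurableSpace α] [MeasurableSpace β]

lemma stmt6_mp_Sy (μX : Measure α) (μY : Measure β) [SFinite μX] [SFinite μY] :
    MeasurePreserving
      (fun w : (α × β) × (α × β) => (((w.1.1, w.2.2), (w.2.1, w.1.2)) : (α × β) × (α × β)))
      ((μX.prod μY).prod (μX.prod μY)) ((μX.prod μY).prod (μX.prod μY)) := by
  have h1 := measurePreserving_prodAssoc μX μY (μX.prod μY)
  have h2 : MeasurePreserving (Prod.map (id : β → β) (Prod.swap : α × β → β × α))
      (μY.prod (μX.prod μY)) (μY.prod (μY.prod μX)) :=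
    (MeasurePreserving.id μY).prod Measure.measurePreserving_swap
  have h3 := MeasurePreserving.symm _ (measurePreserving_prodAssoc μY μY μX)
  have h4 : MeasurePreserving (Prod.map (Prod.swap : β × β → β × β) (id : α → α))
      ((μY.prod μY).prod μX) ((μY.prod μY).prod μX) :=
    Measure.measurePreserving_swap.prod (MeasurePreserving.id μX)
  have h5 := measurePreserving_prodAssoc μY μY μX
  have h6 : MeasurePreserving (Prod.map (id : β → β) (Prod.swap : β × α → α × β))
      (μY.prod (μY.prod μX)) (μY.prod (μX.prod μY)) :=
    (MeasurePreserving.id μY).prod Measure.measurePreserving_swap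
  have hτ := h6.comp (h5.comp (h4.comp (h3.comp h2)))
  have h8 := (MeasurePreserving.id μX).prod hτ
  have h9 := MeasurePreserving.symm _ (measurePreserving_prodAssoc μX μY (μX.prod μY))
  exact h9.comp (h8.comp h1)

lemma stmt6_key (μX : Measure α) (μY : Measure β)
    [IsProbabilityMeasure μX] [IsProbabilityMeasure μY]
    (F : α → α → ℝ≥0∞) (G : β → β → ℝ≥0∞) (H : α → β → ℝ≥0∞)
    (hFm : Measurable (Function.uncurry F)) (hGm : Measurable (Function.uncurry G))
    (hHm : Measurable (Function.uncurry H))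
    (hFs : ∀ x x', F x x' = F x' x) (hGs : ∀ y y', G y y' = G y' y) :
    (∫⁻ w : (α × β) × ((α × β) × ((α × β) × (α × β))),
        F w.1.1 w.2.1.1 * (G w.1.2 w.2.1.2 + G w.2.2.1.2 w.2.2.2.2) *
          (H w.1.1 w.1.2 + H w.2.1.1 w.2.1.2 + H w.2.2.1.1 w.2.2.1.2 + H w.2.2.2.1 w.2.2.2.2)
        ∂((μX.prod μY).prod ((μX.prod μY).prod ((μX.prod μY).prod (μX.prod μY))))) =
      2 * ∫⁻ w : (α × β) × ((α × β) × ((α × β) × (α × β))),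
        F w.1.1 w.2.1.1 * G w.1.2 w.2.2.1.2 *
          (H w.1.1 w.1.2 + H w.2.1.1 w.2.1.2 + H w.2.2.1.1 w.2.2.1.2 + H w.2.2.2.1 w.2.2.2.2)
        ∂((μX.prod μY).prod ((μX.prod μY).prod ((μX.prod μY).prod (μX.prod μY)))) := by
  set μ : Measure (α × β) := μX.prod μY with hμdef
  set ν : Measure ((α × β) × ((α × β) × ((α × β) × (α × β)))) :=
    μ.prod (μ.prod (μ.prod μ)) with hνdef
  -- measurability of projections
  have p_x1 : Measurable fun w : (α × β) × ((α × β) × ((α × β) × (α × β))) => w.1.1 :=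
    measurable_fst.fst
  have p_y1 : Measurable fun w : (α × β) × ((α × β) × ((α × β) × (α × β))) => w.1.2 :=
    measurable_fst.snd
  have p_x2 : Measurable fun w : (α × β) × ((α × β) × ((α × β) × (α × β))) => w.2.1.1 :=
    measurable_snd.fst.fst
  have p_y2 : Measurable fun w : (α × β) × ((α × β) × ((α × β) × (α × β))) => w.2.1.2 :=
    measurable_snd.fst.snd
  have p_x3 : Measurable fun w : (α × β) × ((α × β) × ((α × β) × (α × β))) => w.2.2.1.1 :=
    measurable_snd.snd.fst.fst
  have p_y3 : Measurable fun w : (α × β) × ((α × β) × ((α × β) × (α × β))) => w.2.2.1.2 :=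
    measurable_snd.snd.fst.snd
  have p_x4 : Measurable fun w : (α × β) × ((α × β) × ((α × β) × (α × β))) => w.2.2.2.1 :=
    measurable_snd.snd.snd.fst
  have p_y4 : Measurable fun w : (α × β) × ((α × β) × ((α × β) × (α × β))) => w.2.2.2.2 :=
    measurable_snd.snd.snd.snd
  have mFw : ∀ (j k : (α × β) × ((α × β) × ((α × β) × (α × β))) → α),
      Measurable j → Measurable k → Measurable fun w => F (j w) (k w) :=
    fun _ _ hj hk => hFm.comp (hj.prodMk hk)
  have mGw : ∀ (j k : (α × β) × ((α × β) × ((α × β) × (α × β))) → β),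
      Measurable j → Measurable k → Measurable fun w => G (j w) (k w) :=
    fun _ _ hj hk => hGm.comp (hj.prodMk hk)
  have mHw : ∀ (j : (α × β) × ((α × β) × ((α × β) × (α × β))) → α)
      (k : (α × β) × ((α × β) × ((α × β) × (α × β))) → β),
      Measurable j → Measurable k → Measurable fun w => H (j w) (k w) :=
    fun _ _ hj hk => hHm.comp (hj.prodMk hk)
  have mC1 : Measurable fun w : (α × β) × ((α × β) × ((α × β) × (α × β))) =>
      F w.1.1 w.2.1.1 * G w.1.2 w.2.2.1.2 * H w.1.1 w.1.2 :=
    ((mFw _ _ p_x1 p_x2).mul (mGw _ _ p_y1 p_y3)).mul (mHw _ _ p_x1 p_y1)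
  have mC2 : Measurable fun w : (α × β) × ((α × β) × ((α × β) × (α × β))) =>
      F w.1.1 w.2.1.1 * G w.1.2 w.2.2.1.2 * H w.2.1.1 w.2.1.2 :=
    ((mFw _ _ p_x1 p_x2).mul (mGw _ _ p_y1 p_y3)).mul (mHw _ _ p_x2 p_y2)
  have mC3 : Measurable fun w : (α × β) × ((α × β) × ((α × β) × (α × β))) =>
      F w.1.1 w.2.1.1 * G w.1.2 w.2.2.1.2 * H w.2.2.1.1 w.2.2.1.2 :=
    ((mFw _ _ p_x1 p_x2).mul (mGw _ _ p_y1 p_y3)).mul (mHw _ _ p_x3 p_y3)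
  have mC4 : Measurable fun w : (α × β) × ((α × β) × ((α × β) × (α × β))) =>
      F w.1.1 w.2.1.1 * G w.1.2 w.2.2.1.2 * H w.2.2.2.1 w.2.2.2.2 :=
    ((mFw _ _ p_x1 p_x2).mul (mGw _ _ p_y1 p_y3)).mul (mHw _ _ p_x4 p_y4)
  -- measure preserving maps
  have hSy := stmt6_mp_Sy μX μY
  have hassocW := measurePreserving_prodAssoc μ μ (μ.prod μ)
  have hassoc3 := measurePreserving_prodAssoc μ μ μ
  have hT12 : MeasurePreserving
      (fun w : (α × β) × ((α × β) × ((α × β) × (α × β))) => (w.2.1, (w.1, w.2.2))) ν ν :=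
    hassocW.comp ((Measure.measurePreserving_swap.prod
      (MeasurePreserving.id (μ.prod μ))).comp (MeasurePreserving.symm _ hassocW))
  have hT34 : MeasurePreserving
      (fun w : (α × β) × ((α × β) × ((α × β) × (α × β))) =>
        (w.1, (w.2.1, (w.2.2.2, w.2.2.1)))) ν ν :=
    (MeasurePreserving.id μ).prod
      ((MeasurePreserving.id μ).prod Measure.measurePreserving_swap)
  have hSy12W : MeasurePreserving
      (fun w : (α × β) × ((α × β) × ((α × β) × (α × β))) =>
        ((w.1.1, w.2.1.2), ((w.2.1.1, w.1.2), w.2.2))) ν ν :=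
    hassocW.comp ((hSy.prod (MeasurePreserving.id (μ.prod μ))).comp
      (MeasurePreserving.symm _ hassocW))
  have hSy12T3 : MeasurePreserving
      (fun v : (α × β) × ((α × β) × (α × β)) =>
        ((v.1.1, v.2.1.2), ((v.2.1.1, v.1.2), v.2.2))) (μ.prod (μ.prod μ)) (μ.prod (μ.prod μ)) :=
    hassoc3.comp ((hSy.prod (MeasurePreserving.id μ)).comp (MeasurePreserving.symm _ hassoc3))
  have hys23 : MeasurePreserving
      (fun w : (α × β) × ((α × β) × ((α × β) × (α × β))) =>
        (w.1, ((w.2.1.1, w.2.2.1.2), ((w.2.2.1.1, w.2.1.2), w.2.2.2)))) ν ν :=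
    (MeasurePreserving.id μ).prod hSy12T3
  have hτ'' : MeasurePreserving
      (fun v : (α × β) × ((α × β) × (α × β)) => (v.2.2, (v.2.1, v.1)))
      (μ.prod (μ.prod μ)) (μ.prod (μ.prod μ)) :=
    hassoc3.comp (Measure.measurePreserving_swap.comp
      ((MeasurePreserving.id μ).prod Measure.measurePreserving_swap))
  have hA : MeasurePreserving
      (fun w : (α × β) × ((α × β) × ((α × β) × (α × β))) =>
        (w.1, (w.2.2.2, (w.2.2.1, w.2.1)))) ν ν :=
    (MeasurePreserving.id μ).prod hτ''
  have hys14 : MeasurePreserving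
      (fun w : (α × β) × ((α × β) × ((α × β) × (α × β))) =>
        ((w.1.1, w.2.2.2.2), (w.2.1, (w.2.2.1, (w.2.2.2.1, w.1.2))))) ν ν :=
    hA.comp (hSy12W.comp hA)
  -- the eight term identities
  have e1 : (∫⁻ w, F w.1.1 w.2.1.1 * G w.1.2 w.2.1.2 * H w.1.1 w.1.2 ∂ν) =
      ∫⁻ w, F w.1.1 w.2.1.1 * G w.1.2 w.2.2.1.2 * H w.1.1 w.1.2 ∂ν := by
    rw [← hys23.lintegral_comp mC1]
  have e2 : (∫⁻ w, F w.1.1 w.2.1.1 * G w.1.2 w.2.1.2 * H w.2.1.1 w.2.1.2 ∂ν) =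
      ∫⁻ w, F w.1.1 w.2.1.1 * G w.1.2 w.2.2.1.2 * H w.1.1 w.1.2 ∂ν := by
    rw [← (hys23.comp hT12).lintegral_comp mC1]
    refine lintegral_congr fun w => ?_
    show F w.1.1 w.2.1.1 * G w.1.2 w.2.1.2 * H w.2.1.1 w.2.1.2 =
      F w.2.1.1 w.1.1 * G w.2.1.2 w.1.2 * H w.2.1.1 w.2.1.2
    rw [hFs w.1.1 w.2.1.1, hGs w.1.2 w.2.1.2]
  have e3 : (∫⁻ w, F w.1.1 w.2.1.1 * G w.1.2 w.2.1.2 * H w.2.2.1.1 w.2.2.1.2 ∂ν) =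
      ∫⁻ w, F w.1.1 w.2.1.1 * G w.1.2 w.2.2.1.2 * H w.2.2.2.1 w.2.2.2.2 ∂ν := by
    rw [← (hys23.comp hT34).lintegral_comp mC4]
    exact lintegral_congr fun w => rfl
  have e4 : (∫⁻ w, F w.1.1 w.2.1.1 * G w.1.2 w.2.1.2 * H w.2.2.2.1 w.2.2.2.2 ∂ν) =
      ∫⁻ w, F w.1.1 w.2.1.1 * G w.1.2 w.2.2.1.2 * H w.2.2.2.1 w.2.2.2.2 ∂ν := by
    rw [← hys23.lintegral_comp mC4]
  have e5 : (∫⁻ w, F w.1.1 w.2.1.1 * G w.2.2.1.2 w.2.2.2.2 * H w.1.1 w.1.2 ∂ν) =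
      ∫⁻ w, F w.1.1 w.2.1.1 * G w.1.2 w.2.2.1.2 * H w.2.1.1 w.2.1.2 ∂ν := by
    rw [← (hys14.comp hT12).lintegral_comp mC2]
    refine lintegral_congr fun w => ?_
    show F w.1.1 w.2.1.1 * G w.2.2.1.2 w.2.2.2.2 * H w.1.1 w.1.2 =
      F w.2.1.1 w.1.1 * G w.2.2.2.2 w.2.2.1.2 * H w.1.1 w.1.2
    rw [hFs w.1.1 w.2.1.1, hGs w.2.2.1.2 w.2.2.2.2]
  have e6 : (∫⁻ w, F w.1.1 w.2.1.1 * G w.2.2.1.2 w.2.2.2.2 * H w.2.1.1 w.2.1.2 ∂ν) =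
      ∫⁻ w, F w.1.1 w.2.1.1 * G w.1.2 w.2.2.1.2 * H w.2.1.1 w.2.1.2 ∂ν := by
    rw [← hys14.lintegral_comp mC2]
    refine lintegral_congr fun w => ?_
    show F w.1.1 w.2.1.1 * G w.2.2.1.2 w.2.2.2.2 * H w.2.1.1 w.2.1.2 =
      F w.1.1 w.2.1.1 * G w.2.2.2.2 w.2.2.1.2 * H w.2.1.1 w.2.1.2
    rw [hGs w.2.2.1.2 w.2.2.2.2]
  have e7 : (∫⁻ w, F w.1.1 w.2.1.1 * G w.2.2.1.2 w.2.2.2.2 * H w.2.2.1.1 w.2.2.1.2 ∂ν) =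
      ∫⁻ w, F w.1.1 w.2.1.1 * G w.1.2 w.2.2.1.2 * H w.2.2.1.1 w.2.2.1.2 ∂ν := by
    rw [← hys14.lintegral_comp mC3]
    refine lintegral_congr fun w => ?_
    show F w.1.1 w.2.1.1 * G w.2.2.1.2 w.2.2.2.2 * H w.2.2.1.1 w.2.2.1.2 =
      F w.1.1 w.2.1.1 * G w.2.2.2.2 w.2.2.1.2 * H w.2.2.1.1 w.2.2.1.2
    rw [hGs w.2.2.1.2 w.2.2.2.2]
  have e8 : (∫⁻ w, F w.1.1 w.2.1.1 * G w.2.2.1.2 w.2.2.2.2 * H w.2.2.2.1 w.2.2.2.2 ∂ν) =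
      ∫⁻ w, F w.1.1 w.2.1.1 * G w.1.2 w.2.2.1.2 * H w.2.2.1.1 w.2.2.1.2 ∂ν := by
    rw [← (hys14.comp hT34).lintegral_comp mC3]
    exact lintegral_congr fun w => rfl
  -- split RHS
  have hr : (∫⁻ w, F w.1.1 w.2.1.1 * G w.1.2 w.2.2.1.2 *
        (H w.1.1 w.1.2 + H w.2.1.1 w.2.1.2 + H w.2.2.1.1 w.2.2.1.2 + H w.2.2.2.1 w.2.2.2.2) ∂ν) =
      (∫⁻ w, F w.1.1 w.2.1.1 * G w.1.2 w.2.2.1.2 * H w.1.1 w.1.2 ∂ν) +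
      (∫⁻ w, F w.1.1 w.2.1.1 * G w.1.2 w.2.2.1.2 * H w.2.1.1 w.2.1.2 ∂ν) +
      (∫⁻ w, F w.1.1 w.2.1.1 * G w.1.2 w.2.2.1.2 * H w.2.2.1.1 w.2.2.1.2 ∂ν) +
      (∫⁻ w, F w.1.1 w.2.1.1 * G w.1.2 w.2.2.1.2 * H w.2.2.2.1 w.2.2.2.2 ∂ν) := by
    calc (∫⁻ w, F w.1.1 w.2.1.1 * G w.1.2 w.2.2.1.2 *
        (H w.1.1 w.1.2 + H w.2.1.1 w.2.1.2 + H w.2.2.1.1 w.2.2.1.2 + H w.2.2.2.1 w.2.2.2.2) ∂ν)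
        = ∫⁻ w, (F w.1.1 w.2.1.1 * G w.1.2 w.2.2.1.2 * H w.1.1 w.1.2 +
            F w.1.1 w.2.1.1 * G w.1.2 w.2.2.1.2 * H w.2.1.1 w.2.1.2 +
            F w.1.1 w.2.1.1 * G w.1.2 w.2.2.1.2 * H w.2.2.1.1 w.2.2.1.2 +
            F w.1.1 w.2.1.1 * G w.1.2 w.2.2.1.2 * H w.2.2.2.1 w.2.2.2.2) ∂ν :=
          lintegral_congr fun w => by ring
      _ = _ := by
          rw [lintegral_add_right _ mC4, lintegral_add_right _ mC3, lintegral_add_right _ mC2]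
  -- split LHS and conclude
  calc (∫⁻ w, F w.1.1 w.2.1.1 * (G w.1.2 w.2.1.2 + G w.2.2.1.2 w.2.2.2.2) *
        (H w.1.1 w.1.2 + H w.2.1.1 w.2.1.2 + H w.2.2.1.1 w.2.2.1.2 + H w.2.2.2.1 w.2.2.2.2) ∂ν)
      = ∫⁻ w, (F w.1.1 w.2.1.1 * G w.1.2 w.2.1.2 * H w.1.1 w.1.2 +
          F w.1.1 w.2.1.1 * G w.1.2 w.2.1.2 * H w.2.1.1 w.2.1.2 +
          F w.1.1 w.2.1.1 * G w.1.2 w.2.1.2 * H w.2.2.1.1 w.2.2.1.2 +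
          F w.1.1 w.2.1.1 * G w.1.2 w.2.1.2 * H w.2.2.2.1 w.2.2.2.2 +
          F w.1.1 w.2.1.1 * G w.2.2.1.2 w.2.2.2.2 * H w.1.1 w.1.2 +
          F w.1.1 w.2.1.1 * G w.2.2.1.2 w.2.2.2.2 * H w.2.1.1 w.2.1.2 +
          F w.1.1 w.2.1.1 * G w.2.2.1.2 w.2.2.2.2 * H w.2.2.1.1 w.2.2.1.2 +
          F w.1.1 w.2.1.1 * G w.2.2.1.2 w.2.2.2.2 * H w.2.2.2.1 w.2.2.2.2) ∂ν :=
        lintegral_congr fun w => by ring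
    _ = (∫⁻ w, F w.1.1 w.2.1.1 * G w.1.2 w.2.1.2 * H w.1.1 w.1.2 ∂ν) +
        (∫⁻ w, F w.1.1 w.2.1.1 * G w.1.2 w.2.1.2 * H w.2.1.1 w.2.1.2 ∂ν) +
        (∫⁻ w, F w.1.1 w.2.1.1 * G w.1.2 w.2.1.2 * H w.2.2.1.1 w.2.2.1.2 ∂ν) +
        (∫⁻ w, F w.1.1 w.2.1.1 * G w.1.2 w.2.1.2 * H w.2.2.2.1 w.2.2.2.2 ∂ν) +
        (∫⁻ w, F w.1.1 w.2.1.1 * G w.2.2.1.2 w.2.2.2.2 * H w.1.1 w.1.2 ∂ν) +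
        (∫⁻ w, F w.1.1 w.2.1.1 * G w.2.2.1.2 w.2.2.2.2 * H w.2.1.1 w.2.1.2 ∂ν) +
        (∫⁻ w, F w.1.1 w.2.1.1 * G w.2.2.1.2 w.2.2.2.2 * H w.2.2.1.1 w.2.2.1.2 ∂ν) +
        (∫⁻ w, F w.1.1 w.2.1.1 * G w.2.2.1.2 w.2.2.2.2 * H w.2.2.2.1 w.2.2.2.2 ∂ν) := by
        rw [lintegral_add_right _ (((mFw _ _ p_x1 p_x2).fun_mul (mGw _ _ p_y3 p_y4)).fun_mul
            (mHw _ _ p_x4 p_y4)),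
          lintegral_add_right _ (((mFw _ _ p_x1 p_x2).fun_mul (mGw _ _ p_y3 p_y4)).fun_mul
            (mHw _ _ p_x3 p_y3)),
          lintegral_add_right _ (((mFw _ _ p_x1 p_x2).fun_mul (mGw _ _ p_y3 p_y4)).fun_mul
            (mHw _ _ p_x2 p_y2)),
          lintegral_add_right _ (((mFw _ _ p_x1 p_x2).fun_mul (mGw _ _ p_y3 p_y4)).fun_mul
            (mHw _ _ p_x1 p_y1)),
          lintegral_add_right _ (((mFw _ _ p_x1 p_x2).fun_mul (mGw _ _ p_y1 p_y2)).fun_mul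
            (mHw _ _ p_x4 p_y4)),
          lintegral_add_right _ (((mFw _ _ p_x1 p_x2).fun_mul (mGw _ _ p_y1 p_y2)).fun_mul
            (mHw _ _ p_x3 p_y3)),
          lintegral_add_right _ (((mFw _ _ p_x1 p_x2).fun_mul (mGw _ _ p_y1 p_y2)).fun_mul
            (mHw _ _ p_x2 p_y2))]
    _ = 2 * ∫⁻ w, F w.1.1 w.2.1.1 * G w.1.2 w.2.2.1.2 *
        (H w.1.1 w.1.2 + H w.2.1.1 w.2.1.2 + H w.2.2.1.1 w.2.2.1.2 + H w.2.2.2.1 w.2.2.2.2) ∂ν := by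
        rw [hr, e1, e2, e3, e4, e5, e6, e7, e8]; ring

end Aux

/-- Independence lemma: if `(X,Y), (X',Y'), (X'',Y''), (X''',Y''')` are i.i.d. from a
distribution under which `X` and `Y` are independent (so their common law is the product
measure `μ = μX ⊗ μY`), and `f, g` are nonnegative symmetric measurable functions and `h`
nonnegative measurable, with the relevant expectations finite, then
`E[f(X,X')(g(Y,Y') + g(Y'',Y'''))(h(X,Y)+h(X',Y')+h(X'',Y'')+h(X''',Y'''))]
  = 2 E[f(X,X') g(Y,Y'') (h(X,Y)+h(X',Y')+h(X'',Y'')+h(X''',Y'''))]`. -/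
theorem stmt_6 {p q : ℕ}
    (μX : Measure (EuclideanSpace ℝ (Fin p))) (μY : Measure (EuclideanSpace ℝ (Fin q)))
    [IsProbabilityMeasure μX] [IsProbabilityMeasure μY]
    (f : EuclideanSpace ℝ (Fin p) → EuclideanSpace ℝ (Fin p) → ℝ)
    (g : EuclideanSpace ℝ (Fin q) → EuclideanSpace ℝ (Fin q) → ℝ)
    (h : EuclideanSpace ℝ (Fin p) → EuclideanSpace ℝ (Fin q) → ℝ)
    (hf0 : ∀ x x', 0 ≤ f x x') (hg0 : ∀ y y', 0 ≤ g y y') (hh0 : ∀ x y, 0 ≤ h x y)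
    (hfsymm : ∀ x x', f x x' = f x' x) (hgsymm : ∀ y y', g y y' = g y' y)
    (hfm : Measurable (Function.uncurry f)) (hgm : Measurable (Function.uncurry g))
    (hhm : Measurable (Function.uncurry h))
    (μ : Measure (EuclideanSpace ℝ (Fin p) × EuclideanSpace ℝ (Fin q)))
    (hμ : μ = μX.prod μY)
    (hint1 : Integrable (fun w :
        (EuclideanSpace ℝ (Fin p) × EuclideanSpace ℝ (Fin q)) ×
        ((EuclideanSpace ℝ (Fin p) × EuclideanSpace ℝ (Fin q)) ×
        ((EuclideanSpace ℝ (Fin p) × EuclideanSpace ℝ (Fin q)) ×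
         (EuclideanSpace ℝ (Fin p) × EuclideanSpace ℝ (Fin q)))) =>
        f w.1.1 w.2.1.1 * (g w.1.2 w.2.1.2 + g w.2.2.1.2 w.2.2.2.2) *
          (h w.1.1 w.1.2 + h w.2.1.1 w.2.1.2 + h w.2.2.1.1 w.2.2.1.2 + h w.2.2.2.1 w.2.2.2.2))
        (μ.prod (μ.prod (μ.prod μ))))
    (hint2 : Integrable (fun w :
        (EuclideanSpace ℝ (Fin p) × EuclideanSpace ℝ (Fin q)) ×
        ((EuclideanSpace ℝ (Fin p) × EuclideanSpace ℝ (Fin q)) ×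
        ((EuclideanSpace ℝ (Fin p) × EuclideanSpace ℝ (Fin q)) ×
         (EuclideanSpace ℝ (Fin p) × EuclideanSpace ℝ (Fin q)))) =>
        f w.1.1 w.2.1.1 * g w.1.2 w.2.2.1.2 *
          (h w.1.1 w.1.2 + h w.2.1.1 w.2.1.2 + h w.2.2.1.1 w.2.2.1.2 + h w.2.2.2.1 w.2.2.2.2))
        (μ.prod (μ.prod (μ.prod μ)))) :
    (∫ w, f w.1.1 w.2.1.1 * (g w.1.2 w.2.1.2 + g w.2.2.1.2 w.2.2.2.2) *
        (h w.1.1 w.1.2 + h w.2.1.1 w.2.1.2 + h w.2.2.1.1 w.2.2.1.2 + h w.2.2.2.1 w.2.2.2.2)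
        ∂(μ.prod (μ.prod (μ.prod μ)))) =
      2 * ∫ w, f w.1.1 w.2.1.1 * g w.1.2 w.2.2.1.2 *
        (h w.1.1 w.1.2 + h w.2.1.1 w.2.1.2 + h w.2.2.1.1 w.2.2.1.2 + h w.2.2.2.1 w.2.2.2.2)
        ∂(μ.prod (μ.prod (μ.prod μ))) := by
  have h1 := integral_eq_lintegral_of_nonneg_ae
    (μ := μ.prod (μ.prod (μ.prod μ)))
    (ae_of_all _ fun w => mul_nonneg (mul_nonneg (hf0 w.1.1 w.2.1.1)
      (add_nonneg (hg0 _ _) (hg0 _ _)))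
      (add_nonneg (add_nonneg (add_nonneg (hh0 _ _) (hh0 _ _)) (hh0 _ _)) (hh0 _ _)))
    hint1.1
  have h2 := integral_eq_lintegral_of_nonneg_ae
    (μ := μ.prod (μ.prod (μ.prod μ)))
    (ae_of_all _ fun w => mul_nonneg (mul_nonneg (hf0 w.1.1 w.2.1.1) (hg0 _ _))
      (add_nonneg (add_nonneg (add_nonneg (hh0 _ _) (hh0 _ _)) (hh0 _ _)) (hh0 _ _)))
    hint2.1
  rw [h1, h2]
  subst hμ
  have hkey := stmt6_key μX μY
    (fun a b => ENNReal.ofReal (f a b)) (fun a b => ENNReal.ofReal (g a b))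
    (fun a b => ENNReal.ofReal (h a b))
    (ENNReal.measurable_ofReal.comp hfm) (ENNReal.measurable_ofReal.comp hgm)
    (ENNReal.measurable_ofReal.comp hhm)
    (fun x x' => congrArg ENNReal.ofReal (hfsymm x x')) (fun y y' => congrArg ENNReal.ofReal (hgsymm y y'))
  have hL : (∫⁻ w, ENNReal.ofReal (f w.1.1 w.2.1.1 * (g w.1.2 w.2.1.2 + g w.2.2.1.2 w.2.2.2.2) *
        (h w.1.1 w.1.2 + h w.2.1.1 w.2.1.2 + h w.2.2.1.1 w.2.2.1.2 + h w.2.2.2.1 w.2.2.2.2))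
        ∂((μX.prod μY).prod ((μX.prod μY).prod ((μX.prod μY).prod (μX.prod μY))))) =
      ∫⁻ w, ENNReal.ofReal (f w.1.1 w.2.1.1) *
          (ENNReal.ofReal (g w.1.2 w.2.1.2) + ENNReal.ofReal (g w.2.2.1.2 w.2.2.2.2)) *
          (ENNReal.ofReal (h w.1.1 w.1.2) + ENNReal.ofReal (h w.2.1.1 w.2.1.2) +
           ENNReal.ofReal (h w.2.2.1.1 w.2.2.1.2) + ENNReal.ofReal (h w.2.2.2.1 w.2.2.2.2))
        ∂((μX.prod μY).prod ((μX.prod μY).prod ((μX.prod μY).prod (μX.prod μY)))) :=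
    lintegral_congr fun w => by
      rw [ENNReal.ofReal_mul (mul_nonneg (hf0 _ _) (add_nonneg (hg0 _ _) (hg0 _ _))),
        ENNReal.ofReal_mul (hf0 _ _),
        ENNReal.ofReal_add (hg0 _ _) (hg0 _ _),
        ENNReal.ofReal_add (add_nonneg (add_nonneg (hh0 _ _) (hh0 _ _)) (hh0 _ _)) (hh0 _ _),
        ENNReal.ofReal_add (add_nonneg (hh0 _ _) (hh0 _ _)) (hh0 _ _),
        ENNReal.ofReal_add (hh0 _ _) (hh0 _ _)]
  have hR : (∫⁻ w, ENNReal.ofReal (f w.1.1 w.2.1.1 * g w.1.2 w.2.2.1.2 *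
        (h w.1.1 w.1.2 + h w.2.1.1 w.2.1.2 + h w.2.2.1.1 w.2.2.1.2 + h w.2.2.2.1 w.2.2.2.2))
        ∂((μX.prod μY).prod ((μX.prod μY).prod ((μX.prod μY).prod (μX.prod μY))))) =
      ∫⁻ w, ENNReal.ofReal (f w.1.1 w.2.1.1) * ENNReal.ofReal (g w.1.2 w.2.2.1.2) *
          (ENNReal.ofReal (h w.1.1 w.1.2) + ENNReal.ofReal (h w.2.1.1 w.2.1.2) +
           ENNReal.ofReal (h w.2.2.1.1 w.2.2.1.2) + ENNReal.ofReal (h w.2.2.2.1 w.2.2.2.2))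
        ∂((μX.prod μY).prod ((μX.prod μY).prod ((μX.prod μY).prod (μX.prod μY)))) :=
    lintegral_congr fun w => by
      rw [ENNReal.ofReal_mul (mul_nonneg (hf0 _ _) (hg0 _ _)),
        ENNReal.ofReal_mul (hf0 _ _),
        ENNReal.ofReal_add (add_nonneg (add_nonneg (hh0 _ _) (hh0 _ _)) (hh0 _ _)) (hh0 _ _),
        ENNReal.ofReal_add (add_nonneg (hh0 _ _) (hh0 _ _)) (hh0 _ _),
        ENNReal.ofReal_add (hh0 _ _) (hh0 _ _)]
  rw [hL, hR]
  have h3 : (∫⁻ w, ENNReal.ofReal (f w.1.1 w.2.1.1) *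
          (ENNReal.ofReal (g w.1.2 w.2.1.2) + ENNReal.ofReal (g w.2.2.1.2 w.2.2.2.2)) *
          (ENNReal.ofReal (h w.1.1 w.1.2) + ENNReal.ofReal (h w.2.1.1 w.2.1.2) +
           ENNReal.ofReal (h w.2.2.1.1 w.2.2.1.2) + ENNReal.ofReal (h w.2.2.2.1 w.2.2.2.2))
        ∂((μX.prod μY).prod ((μX.prod μY).prod ((μX.prod μY).prod (μX.prod μY))))) =
      2 * ∫⁻ w, ENNReal.ofReal (f w.1.1 w.2.1.1) * ENNReal.ofReal (g w.1.2 w.2.2.1.2) *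
          (ENNReal.ofReal (h w.1.1 w.1.2) + ENNReal.ofReal (h w.2.1.1 w.2.1.2) +
           ENNReal.ofReal (h w.2.2.1.1 w.2.2.1.2) + ENNReal.ofReal (h w.2.2.2.1 w.2.2.2.2))
        ∂((μX.prod μY).prod ((μX.prod μY).prod ((μX.prod μY).prod (μX.prod μY)))) := hkey
  rw [h3, ENNReal.toReal_mul]
  simp
end

section
/- For each integer p ≥ 1 and each fixed r ≥ 0, the function δ ↦ H_p(r;δ) := ∫_{‖z‖ ≤ δ ∪ ‖z‖ ≥ 1/δ} (1 - cos(r z₁))/‖z‖^{1+p} dz is continuous and increasing on [0,1], with H_p(r;0) = 0 and H_p(r;1) = r·c_p, where c_p = π^{(1+p)/2}/Γ((1+p)/2). -/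
open MeasureTheory
open Real Set Filter Topology

/-- `c_d = π^{(1+d)/2} / Γ((1+d)/2)`. -/
noncomputable def cConst (d : ℕ) : ℝ :=
  Real.pi ^ (((1 : ℝ) + d) / 2) / Real.Gamma (((1 : ℝ) + d) / 2)

/-- `H_p(r;δ) = ∫_{‖z‖ ≤ δ ∪ ‖z‖ ≥ 1/δ} (1 - cos(r z₁)) / ‖z‖^{1+p} dz`, where the
condition `‖z‖ ≥ 1/δ` is encoded as `1 ≤ δ‖z‖` so that for `δ = 0` the region degenerates
to `{0}` (giving `H_p(r;0) = 0`). -/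
noncomputable def Hp (p : ℕ) (r δ : ℝ) : ℝ :=
  if h : 0 < p then
    ∫ z in {z : EuclideanSpace ℝ (Fin p) | ‖z‖ ≤ δ ∨ 1 ≤ δ * ‖z‖},
      (1 - Real.cos (r * z ⟨0, h⟩)) / ‖z‖ ^ (1 + p)
  else 0

section AuxLemmas

attribute [local fun_prop] WithLp.measurable_ofLp


lemma phi2_integrableOn {a : ℝ} (ha : 0 < a) :
    IntegrableOn (fun t : ℝ => t ^ (-(3:ℝ)/2) * Real.exp (-(a/t))) (Ioi 0) := by
  have hg : IntegrableOn (fun u : ℝ => u ^ (-(1:ℝ)/2) * Real.exp (-(a*u))) (Ioi 0) := by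
    have := integrableOn_rpow_mul_exp_neg_mul_rpow (s := -(1:ℝ)/2) (p := 1) (b := a)
      (by norm_num) one_pos ha
    refine this.congr_fun (fun x hx => ?_) measurableSet_Ioi
    dsimp only
    rw [rpow_one, neg_mul]
  have := (integrableOn_Ioi_comp_rpow_iff
      (fun u : ℝ => u ^ (-(1:ℝ)/2) * Real.exp (-(a*u))) (p := (-1:ℝ)) (by norm_num)).2 hg
  refine this.congr_fun (fun x hx => ?_) measurableSet_Ioi
  have hx0 : (0:ℝ) < x := hx
  dsimp only
  rw [abs_neg, abs_one, one_mul, smul_eq_mul, Real.rpow_neg_one, Real.inv_rpow hx0.le,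
    ← Real.rpow_neg hx0.le, ← mul_assoc, ← Real.rpow_add hx0, ← div_eq_mul_inv]
  norm_num

lemma phi2_integral {a : ℝ} (ha : 0 < a) :
    ∫ t in Ioi (0:ℝ), t ^ (-(3:ℝ)/2) * Real.exp (-(a/t))
      = Real.sqrt π / Real.sqrt a := by
  have key := integral_comp_rpow_Ioi
    (fun u : ℝ => u ^ (-(1:ℝ)/2) * Real.exp (-(a*u))) (p := (-1:ℝ)) (by norm_num)
  have h1 : ∫ x in Ioi (0:ℝ),
      (|(-1:ℝ)| * x ^ ((-1:ℝ) - 1)) • ((x ^ (-1:ℝ)) ^ (-(1:ℝ)/2) * Real.exp (-(a * x ^ (-1:ℝ))))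
      = ∫ t in Ioi (0:ℝ), t ^ (-(3:ℝ)/2) * Real.exp (-(a/t)) := by
    refine setIntegral_congr_fun measurableSet_Ioi (fun x hx => ?_)
    have hx0 : (0:ℝ) < x := hx
    rw [abs_neg, abs_one, one_mul, smul_eq_mul, Real.rpow_neg_one, Real.inv_rpow hx0.le,
      ← Real.rpow_neg hx0.le, ← mul_assoc, ← Real.rpow_add hx0, ← div_eq_mul_inv]
    norm_num
  have h2 : ∫ u in Ioi (0:ℝ), u ^ (-(1:ℝ)/2) * Real.exp (-(a*u))
      = (1/a) ^ ((1:ℝ)/2) * Real.Gamma (1/2) := by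
    have := Real.integral_rpow_mul_exp_neg_mul_Ioi (a := (1:ℝ)/2) (r := a) (by norm_num) ha
    rw [← this]
    refine setIntegral_congr_fun measurableSet_Ioi (fun x hx => ?_)
    norm_num
  rw [← h1, key, h2, Real.Gamma_one_half_eq, one_div, Real.inv_rpow ha.le, ← Real.sqrt_eq_rpow]
  rw [div_eq_inv_mul]

lemma phi1_meas {a : ℝ} : Measurable (fun t : ℝ => t ^ (-(1:ℝ)/2) * (1 - Real.exp (-(a/t)))) := by
  fun_prop

lemma phi1_integrableOn {a : ℝ} (ha : 0 < a) :
    IntegrableOn (fun t : ℝ => t ^ (-(1:ℝ)/2) * (1 - Real.exp (-(a/t)))) (Ioi 0) := by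
  rw [← Ioc_union_Ioi_eq_Ioi (zero_le_one)]
  refine IntegrableOn.union ?_ ?_
  · have hg : IntegrableOn (fun t : ℝ => t ^ (-(1:ℝ)/2)) (Ioc (0:ℝ) 1) :=
      (intervalIntegrable_iff_integrableOn_Ioc_of_le zero_le_one).1
        (intervalIntegral.intervalIntegrable_rpow' (by norm_num))
    refine hg.mono' phi1_meas.aestronglyMeasurable ?_
    filter_upwards [ae_restrict_mem measurableSet_Ioc] with t ht
    have ht0 : (0:ℝ) < t := ht.1
    have h1 : 0 ≤ 1 - Real.exp (-(a/t)) := by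
      have : Real.exp (-(a/t)) ≤ 1 := Real.exp_le_one_iff.2 (neg_nonpos.2 (by positivity))
      linarith
    have h2 : 1 - Real.exp (-(a/t)) ≤ 1 := by
      have := Real.exp_pos (-(a/t)); linarith
    rw [Real.norm_eq_abs, abs_of_nonneg (mul_nonneg (by positivity) h1)]
    calc t ^ (-(1:ℝ)/2) * (1 - Real.exp (-(a/t))) ≤ t ^ (-(1:ℝ)/2) * 1 :=
          mul_le_mul_of_nonneg_left h2 (by positivity)
      _ = t ^ (-(1:ℝ)/2) := mul_one _
  · have hg : IntegrableOn (fun t : ℝ => a * t ^ (-(3:ℝ)/2)) (Ioi (1:ℝ)) :=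
      (integrableOn_Ioi_rpow_of_lt (by norm_num) one_pos).const_mul a
    refine hg.mono' phi1_meas.aestronglyMeasurable ?_
    filter_upwards [ae_restrict_mem measurableSet_Ioi] with t ht
    have ht0 : (0:ℝ) < t := lt_trans one_pos ht
    have h1 : 0 ≤ 1 - Real.exp (-(a/t)) := by
      have : Real.exp (-(a/t)) ≤ 1 := Real.exp_le_one_iff.2 (neg_nonpos.2 (by positivity))
      linarith
    have h2 : 1 - Real.exp (-(a/t)) ≤ a / t := by
      have := Real.add_one_le_exp (-(a/t))
      linarith
    rw [Real.norm_eq_abs, abs_of_nonneg (mul_nonneg (by positivity) h1)]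
    calc t ^ (-(1:ℝ)/2) * (1 - Real.exp (-(a/t))) ≤ t ^ (-(1:ℝ)/2) * (a/t) :=
          mul_le_mul_of_nonneg_left h2 (by positivity)
      _ = a * t ^ (-(3:ℝ)/2) := by
          rw [div_eq_mul_inv a t, ← Real.rpow_neg_one t, mul_comm (t ^ (-(1:ℝ)/2)),
            mul_assoc, ← Real.rpow_add ht0]
          norm_num

lemma hasDerivAt_F {a : ℝ} (ha : 0 < a) {x : ℝ} (hx : 0 < x) :
    HasDerivAt (fun t : ℝ => 2 * t ^ ((1:ℝ)/2) * (1 - Real.exp (-(a/t))))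
      (x ^ (-(1:ℝ)/2) * (1 - Real.exp (-(a/x)))
        - 2 * a * (x ^ (-(3:ℝ)/2) * Real.exp (-(a/x)))) x := by
  have h1 : HasDerivAt (fun t : ℝ => 2 * t ^ ((1:ℝ)/2))
      (2 * ((1/2) * x ^ ((1:ℝ)/2 - 1))) x :=
    (Real.hasDerivAt_rpow_const (Or.inl hx.ne')).const_mul 2
  have heq : (fun t : ℝ => -(a/t)) = fun t => -(a * t⁻¹) := by
    funext t; rw [div_eq_mul_inv]
  have h2 : HasDerivAt (fun t : ℝ => -(a/t)) (a * (x^2)⁻¹) x := by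
    rw [heq]
    have h' := ((hasDerivAt_inv hx.ne').const_mul a).neg
    exact h'.congr_deriv (by ring)
  have h3 : HasDerivAt (fun t : ℝ => 1 - Real.exp (-(a/t)))
      (-(Real.exp (-(a/x)) * (a * (x^2)⁻¹))) x := (h2.exp).const_sub 1
  have := h1.mul h3
  have hx1 : x ^ ((1:ℝ)/2 - 1) = x ^ (-(1:ℝ)/2) := by norm_num
  have hx2 : x ^ (-(3:ℝ)/2) = x ^ ((1:ℝ)/2) * (x^2)⁻¹ := by
    rw [← Real.rpow_natCast x 2, ← Real.rpow_neg hx.le, ← Real.rpow_add hx]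
    norm_num
  rw [hx1] at this
  exact this.congr_deriv (by rw [hx2]; ring)

lemma phi1_integral {a : ℝ} (ha : 0 < a) :
    ∫ t in Ioi (0:ℝ), t ^ (-(1:ℝ)/2) * (1 - Real.exp (-(a/t)))
      = 2 * Real.sqrt a * Real.sqrt π := by
  set F : ℝ → ℝ := fun t => 2 * t ^ ((1:ℝ)/2) * (1 - Real.exp (-(a/t))) with hF
  have hint2 := phi2_integrableOn ha
  have hint1 := phi1_integrableOn ha
  have f'int : IntegrableOn (fun x : ℝ => x ^ (-(1:ℝ)/2) * (1 - Real.exp (-(a/x)))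
      - 2 * a * (x ^ (-(3:ℝ)/2) * Real.exp (-(a/x)))) (Ioi 0) :=
    hint1.sub (hint2.const_mul (2*a))
  have hF0 : F 0 = 0 := by simp [hF, Real.zero_rpow (by norm_num : ((1:ℝ)/2) ≠ 0)]
  have hcont : ContinuousWithinAt F (Ici 0) 0 := by
    rw [ContinuousWithinAt, hF0]
    apply squeeze_zero' (g := fun t : ℝ => 2 * t ^ ((1:ℝ)/2))
    · filter_upwards [eventually_mem_nhdsWithin] with t (ht : 0 ≤ t)
      have h1 : Real.exp (-(a/t)) ≤ 1 :=
        Real.exp_le_one_iff.2 (neg_nonpos.2 (by positivity))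
      have : 0 ≤ 1 - Real.exp (-(a/t)) := by linarith
      positivity
    · filter_upwards [eventually_mem_nhdsWithin] with t (ht : 0 ≤ t)
      have h1 : 0 < Real.exp (-(a/t)) := Real.exp_pos _
      have : 1 - Real.exp (-(a/t)) ≤ 1 := by linarith
      calc F t ≤ 2 * t ^ ((1:ℝ)/2) * 1 :=
            mul_le_mul_of_nonneg_left this (by positivity)
        _ = 2 * t ^ ((1:ℝ)/2) := mul_one _
    · have : Tendsto (fun t : ℝ => t ^ ((1:ℝ)/2)) (nhdsWithin 0 (Ici 0)) (𝓝 0) := by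
        have hc : ContinuousAt (fun t : ℝ => t ^ ((1:ℝ)/2)) 0 := by
          apply Real.continuousAt_rpow_const
          norm_num
        have := hc.continuousWithinAt (s := Ici (0:ℝ))
        rw [ContinuousWithinAt] at this
        simpa [Real.zero_rpow (by norm_num : ((1:ℝ)/2) ≠ 0)] using this
      simpa using this.const_mul 2
  have htop : Tendsto F atTop (𝓝 0) := by
    apply squeeze_zero' (g := fun t : ℝ => 2 * a * t ^ (-(1:ℝ)/2))
    · filter_upwards [eventually_gt_atTop (0:ℝ)] with t ht
      have h1 : Real.exp (-(a/t)) ≤ 1 :=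
        Real.exp_le_one_iff.2 (neg_nonpos.2 (by positivity))
      have : 0 ≤ 1 - Real.exp (-(a/t)) := by linarith
      positivity
    · filter_upwards [eventually_gt_atTop (0:ℝ)] with t ht
      have h2 : 1 - Real.exp (-(a/t)) ≤ a / t := by
        have := Real.add_one_le_exp (-(a/t))
        linarith
      calc F t ≤ 2 * t ^ ((1:ℝ)/2) * (a / t) :=
            mul_le_mul_of_nonneg_left h2 (by positivity)
        _ = 2 * a * t ^ (-(1:ℝ)/2) := by
            rw [div_eq_mul_inv a t, ← Real.rpow_neg_one t]
            rw [mul_assoc, mul_comm (t ^ ((1:ℝ)/2)), mul_assoc, mul_assoc,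
              ← Real.rpow_add ht]
            norm_num
    · have h0 : Tendsto (fun t : ℝ => t ^ (-(1:ℝ)/2)) atTop (𝓝 0) := by
        have := tendsto_rpow_neg_atTop (y := (1:ℝ)/2) (by norm_num)
        convert this using 3
        norm_num
      have := h0.const_mul (2*a)
      simpa using this
  have key := integral_Ioi_of_hasDerivAt_of_tendsto hcont
    (fun x hx => hasDerivAt_F ha (mem_Ioi.1 hx)) f'int htop
  rw [hF0, sub_zero] at key
  rw [integral_sub hint1 (hint2.const_mul (2*a))] at key
  have h2v : ∫ t in Ioi (0:ℝ), 2 * a * (t ^ (-(3:ℝ)/2) * Real.exp (-(a/t)))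
      = 2 * a * (Real.sqrt π / Real.sqrt a) := by
    rw [← phi2_integral ha, ← integral_const_mul]
  rw [h2v] at key
  have hsa : 0 < Real.sqrt a := Real.sqrt_pos.2 ha
  have : a / Real.sqrt a = Real.sqrt a := Real.div_sqrt
  field_simp at key ⊢
  nlinarith [key, Real.sq_sqrt ha.le, Real.sqrt_nonneg π, Real.sqrt_nonneg a]


lemma gaussian_cos (p : ℕ) (hp : 0 < p) (r t : ℝ) (ht : 0 < t) :
    ∫ z : EuclideanSpace ℝ (Fin p), Real.cos (r * z ⟨0, hp⟩) * Real.exp (-(t * ‖z‖^2))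
      = (π / t) ^ ((p:ℝ)/2) * Real.exp (-(r^2 / (4*t))) := by
  have hb : 0 < (t:ℂ).re := by simpa using ht
  set i0 : Fin p := ⟨0, hp⟩
  set w : EuclideanSpace ℝ (Fin p) := EuclideanSpace.single i0 (1:ℝ) with hw
  have key := GaussianFourier.integral_cexp_neg_mul_sq_norm_add (V := EuclideanSpace ℝ (Fin p)) hb
    (Complex.I * r) w
  have hint := GaussianFourier.integrable_cexp_neg_mul_sq_norm_add (V := EuclideanSpace ℝ (Fin p)) hb
    (Complex.I * r) w
  have hre := congrArg Complex.re key
  rw [← RCLike.re_to_complex, ← integral_re hint] at hre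
  have hL : (∫ v : EuclideanSpace ℝ (Fin p),
      RCLike.re (Complex.exp (-(t:ℂ) * (‖v‖:ℂ)^2 + (Complex.I * r) * ((inner ℝ w v : ℝ) : ℂ))))
      = ∫ z : EuclideanSpace ℝ (Fin p), Real.cos (r * z i0) * Real.exp (-(t * ‖z‖^2)) := by
    refine integral_congr_ae (Eventually.of_forall fun v => ?_)
    have hwv : (inner ℝ w v : ℝ) = v i0 := by
      rw [hw, EuclideanSpace.inner_single_left]; simp
    simp only [hwv, RCLike.re_to_complex, Complex.exp_re]
    simp [Complex.add_re, Complex.mul_re, Complex.add_im, Complex.mul_im,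
      ← Complex.ofReal_pow]
    ring_nf
  rw [hL] at hre
  rw [hre]
  have hnw : ‖w‖ = (1:ℝ) := by rw [hw, EuclideanSpace.norm_single]; norm_num
  rw [hnw]
  have harg : ((Complex.I * r)^2 * ((1:ℝ):ℂ)^2 / (4 * t)) = ((-(r^2/(4*t)) : ℝ) : ℂ) := by
    rw [mul_pow, Complex.I_sq]
    push_cast
    ring
  rw [harg, ← Complex.ofReal_exp]
  have hfr : (Module.finrank ℝ (EuclideanSpace ℝ (Fin p)) : ℂ) / 2 = (((p:ℝ)/2 : ℝ) : ℂ) := by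
    rw [finrank_euclideanSpace_fin]
    push_cast
    ring
  rw [hfr]
  have hbase : ((π:ℂ) / (t:ℂ)) = ((π/t : ℝ) : ℂ) := by push_cast; ring
  rw [hbase, ← Complex.ofReal_cpow (by positivity), ← Complex.ofReal_mul, Complex.ofReal_re]


lemma kern_int {b : ℝ} (hb : 0 < b) {σ : ℝ} (hσ : 0 < σ) :
    IntegrableOn (fun t : ℝ => t ^ (σ-1) * Real.exp (-(b*t))) (Ioi 0) := by
  have := integrableOn_rpow_mul_exp_neg_mul_rpow (s := σ-1) (p := 1) (b := b)
    (by linarith) one_pos hb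
  refine this.congr_fun (fun x hx => ?_) measurableSet_Ioi
  dsimp only
  rw [rpow_one, neg_mul]

section main
variable {p : ℕ}

lemma main_integral (p : ℕ) (hp : 0 < p) (r : ℝ) (hrpos : 0 < r) :
    Integrable (fun z : EuclideanSpace ℝ (Fin p) =>
      (1 - Real.cos (r * z ⟨0, hp⟩)) / ‖z‖ ^ (1+p)) ∧
    ∫ z : EuclideanSpace ℝ (Fin p), (1 - Real.cos (r * z ⟨0, hp⟩)) / ‖z‖ ^ (1+p)
      = r * cConst p := by
  classical
  set E := EuclideanSpace ℝ (Fin p)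
  set i0 : Fin p := ⟨0, hp⟩
  set s : ℝ := ((1:ℝ) + p) / 2 with hs_def
  have hs : 0 < s := by positivity
  set a : ℝ := r^2/4 with ha_def
  have ha : 0 < a := by positivity
  set q : ℝ := (p:ℝ)/2 with hq_def
  set f : E → ℝ := fun z => (1 - Real.cos (r * z i0)) / ‖z‖ ^ (1+p) with hf_def
  have fnn : ∀ z, 0 ≤ f z := fun z =>
    div_nonneg (by have := Real.cos_le_one (r * z i0); linarith) (by positivity)
  have fmeas : Measurable f := by
    apply Measurable.div
    · simp only [E]; fun_prop
    · fun_prop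
  set g : E → ℝ → ℝ := fun z t =>
    (1 - Real.cos (r * z i0)) * (t ^ (s-1) * Real.exp (-(‖z‖^2 * t))) with hg_def
  have gnn : ∀ z, ∀ t ∈ Ioi (0:ℝ), 0 ≤ g z t := by
    intro z t ht
    have := Real.cos_le_one (r * z i0)
    have h1 : (0:ℝ) ≤ 1 - Real.cos (r * z i0) := by linarith
    have ht0 : (0:ℝ) < t := ht
    positivity
  -- Claim A
  have claimA : ∀ z : E, z ≠ 0 →
      ∫⁻ t in Ioi (0:ℝ), ENNReal.ofReal (g z t)
        = ENNReal.ofReal (f z * Real.Gamma s) := by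
    intro z hz
    have hz0 : (0:ℝ) < ‖z‖ := norm_pos_iff.2 hz
    have hb : (0:ℝ) < ‖z‖^2 := by positivity
    have hc : (0:ℝ) ≤ 1 - Real.cos (r * z i0) := by
      have := Real.cos_le_one (r * z i0); linarith
    have hkint := kern_int hb hs
    have step1 : ∫⁻ t in Ioi (0:ℝ), ENNReal.ofReal (g z t)
        = ENNReal.ofReal (1 - Real.cos (r * z i0))
          * ∫⁻ t in Ioi (0:ℝ), ENNReal.ofReal (t ^ (s-1) * Real.exp (-(‖z‖^2 * t))) := by
      rw [← lintegral_const_mul' _ _ ENNReal.ofReal_ne_top]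
      refine lintegral_congr (fun t => ?_)
      rw [← ENNReal.ofReal_mul hc]
    have step2 : ∫⁻ t in Ioi (0:ℝ), ENNReal.ofReal (t ^ (s-1) * Real.exp (-(‖z‖^2 * t)))
        = ENNReal.ofReal ((1/‖z‖^2) ^ s * Real.Gamma s) := by
      rw [← ofReal_integral_eq_lintegral_ofReal hkint]
      · rw [Real.integral_rpow_mul_exp_neg_mul_Ioi hs hb]
      · filter_upwards [ae_restrict_mem measurableSet_Ioi] with t ht
        have ht0 : (0:ℝ) < t := ht
        positivity
    rw [step1, step2, ← ENNReal.ofReal_mul hc]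
    congr 1
    have hpow : ((1:ℝ)/‖z‖^2) ^ s = (‖z‖ ^ (1+p) : ℝ)⁻¹ := by
      have h2s : ((2:ℕ):ℝ) * s = (((1+p):ℕ):ℝ) := by push_cast; rw [hs_def]; ring
      rw [one_div, ← Real.rpow_natCast ‖z‖ 2, ← Real.rpow_natCast ‖z‖ (1+p),
        Real.inv_rpow (Real.rpow_nonneg (norm_nonneg z) _),
        ← Real.rpow_mul (norm_nonneg z), h2s]
    rw [hpow]
    simp only [hf_def]
    rw [div_eq_mul_inv]
    ring
  -- Claim B
  have claimB : ∀ t ∈ Ioi (0:ℝ),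
      (∫⁻ z : E, ENNReal.ofReal (g z t))
        = ENNReal.ofReal (π ^ q * (t ^ (-(1:ℝ)/2) * (1 - Real.exp (-(a/t))))) := by
    intro t ht
    have ht0 : (0:ℝ) < t := ht
    set h : E → ℝ := fun z => (1 - Real.cos (r * z i0)) * Real.exp (-(t*‖z‖^2)) with hh_def
    have hg1 : Integrable (fun z : E => Real.exp (-(t*‖z‖^2))) := by
      have h1 := (GaussianFourier.integrable_cexp_neg_mul_sq_norm_add
        (V := E) (b := (t:ℂ)) (by simpa using ht0) 0 0).norm
      refine h1.congr (Eventually.of_forall fun z => ?_)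
      simp only [Complex.norm_exp]
      congr 1
      simp [← Complex.ofReal_pow]
    have hg2 : Integrable (fun z : E => Real.cos (r * z i0) * Real.exp (-(t*‖z‖^2))) := by
      have hm2 : Measurable (fun z : E => Real.cos (r * z i0) * Real.exp (-(t*‖z‖^2))) :=
        Measurable.mul (by simp only [E]; fun_prop) (by fun_prop)
      refine hg1.mono' hm2.aestronglyMeasurable (Eventually.of_forall fun z => ?_)
      rw [Real.norm_eq_abs, abs_mul]
      calc |Real.cos (r * z i0)| * |Real.exp (-(t*‖z‖^2))|
          ≤ 1 * |Real.exp (-(t*‖z‖^2))| :=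
            mul_le_mul_of_nonneg_right (Real.abs_cos_le_one _) (abs_nonneg _)
        _ = Real.exp (-(t*‖z‖^2)) := by rw [one_mul, abs_of_pos (Real.exp_pos _)]
    have hInth : Integrable h := by
      refine (hg1.sub hg2).congr (Eventually.of_forall fun z => ?_)
      simp only [hh_def, Pi.sub_apply]; ring
    have hnnh : ∀ z : E, 0 ≤ h z := fun z => by
      have := Real.cos_le_one (r * z i0)
      have h1 : (0:ℝ) ≤ 1 - Real.cos (r * z i0) := by linarith
      simp only [hh_def]; positivity
    have hval : ∫ z : E, h z = (π/t)^q * (1 - Real.exp (-(r^2/(4*t)))) := by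
      have heq : ∫ z : E, h z = ∫ z : E,
          (Real.exp (-(t*‖z‖^2)) - Real.cos (r * z i0) * Real.exp (-(t*‖z‖^2))) := by
        refine integral_congr_ae (Eventually.of_forall fun z => ?_)
        simp only [hh_def]; ring
      rw [heq, integral_sub hg1 hg2]
      have hG : ∫ z : E, Real.exp (-(t*‖z‖^2)) = (π/t)^q := by
        have := GaussianFourier.integral_rexp_neg_mul_sq_norm (V := E) ht0
        rw [show ∫ z : E, Real.exp (-(t*‖z‖^2)) = ∫ v : E, Real.exp (-t*‖v‖^2) by
          refine integral_congr_ae (Eventually.of_forall fun z => ?_); simp [neg_mul], this,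
          finrank_euclideanSpace_fin, hq_def]
      have hC := gaussian_cos p hp r t ht0
      rw [hG, hC]
      ring
    have hstep : (∫⁻ z : E, ENNReal.ofReal (g z t))
        = ENNReal.ofReal (t^(s-1)) * ∫⁻ z : E, ENNReal.ofReal (h z) := by
      rw [← lintegral_const_mul' _ _ ENNReal.ofReal_ne_top]
      refine lintegral_congr fun z => ?_
      rw [← ENNReal.ofReal_mul (Real.rpow_nonneg ht0.le _)]
      congr 1
      simp only [hg_def, hh_def]
      rw [show ‖z‖^2 * t = t * ‖z‖^2 from mul_comm _ _]
      ring
    rw [hstep, ← ofReal_integral_eq_lintegral_ofReal hInth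
      (Eventually.of_forall hnnh), hval,
      ← ENNReal.ofReal_mul (Real.rpow_nonneg ht0.le _)]
    congr 1
    have h1 : r^2/(4*t) = a/t := by rw [ha_def]; ring
    have h2 : (π/t)^q = π^q * t^(-q) := by
      rw [Real.div_rpow Real.pi_pos.le ht0.le, Real.rpow_neg ht0.le, div_eq_mul_inv]
    have hexp : s - 1 + -q = -(1:ℝ)/2 := by rw [hs_def, hq_def]; ring
    rw [h1, h2]
    rw [show t^(s-1) * (π^q * t^(-q) * (1 - Real.exp (-(a/t))))
        = π^q * ((t^(s-1) * t^(-q)) * (1 - Real.exp (-(a/t)))) from by ring,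
      ← Real.rpow_add ht0, hexp]
  -- Claim C
  have claimC : ∫⁻ t in Ioi (0:ℝ),
      ENNReal.ofReal (π ^ q * (t ^ (-(1:ℝ)/2) * (1 - Real.exp (-(a/t)))))
        = ENNReal.ofReal (π ^ q * (2 * Real.sqrt a * Real.sqrt π)) := by
    have hπq : (0:ℝ) ≤ π ^ q := Real.rpow_nonneg Real.pi_pos.le _
    have : ∫⁻ t in Ioi (0:ℝ),
        ENNReal.ofReal (π ^ q * (t ^ (-(1:ℝ)/2) * (1 - Real.exp (-(a/t)))))
        = ENNReal.ofReal (π ^ q)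
          * ∫⁻ t in Ioi (0:ℝ), ENNReal.ofReal (t ^ (-(1:ℝ)/2) * (1 - Real.exp (-(a/t)))) := by
      rw [← lintegral_const_mul' _ _ ENNReal.ofReal_ne_top]
      refine lintegral_congr fun t => ?_
      rw [← ENNReal.ofReal_mul hπq]
    rw [this, ← ofReal_integral_eq_lintegral_ofReal (phi1_integrableOn ha) ?_,
      phi1_integral ha, ← ENNReal.ofReal_mul hπq]
    filter_upwards [ae_restrict_mem measurableSet_Ioi] with t ht
    have ht0 : (0:ℝ) < t := ht
    have h1 : Real.exp (-(a/t)) ≤ 1 :=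
      Real.exp_le_one_iff.2 (neg_nonpos.2 (by positivity))
    have : (0:ℝ) ≤ 1 - Real.exp (-(a/t)) := by linarith
    positivity
  -- swap
  have hmeas_g : Measurable (fun zt : E × ℝ => ENNReal.ofReal (g zt.1 zt.2)) := by
    apply ENNReal.measurable_ofReal.comp
    simp only [hg_def, E]
    fun_prop
  have swap : (∫⁻ z : E, ∫⁻ t in Ioi (0:ℝ), ENNReal.ofReal (g z t))
      = ∫⁻ t in Ioi (0:ℝ), ∫⁻ z : E, ENNReal.ofReal (g z t) :=
    lintegral_lintegral_swap hmeas_g.aemeasurable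
  -- a.e. z ≠ 0
  haveI : Nontrivial E := ⟨⟨EuclideanSpace.single i0 1, 0, by
    intro hcontr
    have := congrArg norm hcontr
    rw [EuclideanSpace.norm_single, norm_zero] at this
    norm_num at this⟩⟩
  have hae : ∀ᵐ z : E, z ≠ 0 := by
    have h0 : (volume : Measure E) {0} = 0 := measure_singleton 0
    filter_upwards [compl_mem_ae_iff.2 h0] with z hz
    simpa using hz
  have left : (∫⁻ z : E, ∫⁻ t in Ioi (0:ℝ), ENNReal.ofReal (g z t))
      = (∫⁻ z : E, ENNReal.ofReal (f z)) * ENNReal.ofReal (Real.Gamma s) := by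
    rw [← lintegral_mul_const' _ _ ENNReal.ofReal_ne_top]
    refine lintegral_congr_ae ?_
    filter_upwards [hae] with z hz
    rw [claimA z hz, ENNReal.ofReal_mul (fnn z)]
  have right : (∫⁻ t in Ioi (0:ℝ), ∫⁻ z : E, ENNReal.ofReal (g z t))
      = ENNReal.ofReal (π ^ q * (2 * Real.sqrt a * Real.sqrt π)) := by
    rw [← claimC]
    refine lintegral_congr_ae ?_
    filter_upwards [ae_restrict_mem measurableSet_Ioi] with t ht
    exact claimB t ht
  have keyEq : (∫⁻ z : E, ENNReal.ofReal (f z)) * ENNReal.ofReal (Real.Gamma s)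
      = ENNReal.ofReal (π ^ q * (2 * Real.sqrt a * Real.sqrt π)) := by
    rw [← left, swap, right]
  have hΓ : 0 < Real.Gamma s := Real.Gamma_pos_of_pos hs
  have hfin : (∫⁻ z : E, ENNReal.ofReal (f z)) ≠ ⊤ := by
    intro hcontr
    rw [hcontr, ENNReal.top_mul (by
      simp only [ne_eq, ENNReal.ofReal_eq_zero, not_le]; exact hΓ)] at keyEq
    exact (ENNReal.ofReal_ne_top keyEq.symm).elim
  have hIntf : Integrable f := by
    refine ⟨fmeas.aestronglyMeasurable, ?_⟩
    rw [hasFiniteIntegral_iff_norm]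
    have : ∀ z : E, ENNReal.ofReal ‖f z‖ = ENNReal.ofReal (f z) := fun z => by
      rw [Real.norm_eq_abs, abs_of_nonneg (fnn z)]
    simp_rw [this]
    exact lt_top_iff_ne_top.2 hfin
  have hof : ENNReal.ofReal (∫ z : E, f z) = ∫⁻ z : E, ENNReal.ofReal (f z) :=
    ofReal_integral_eq_lintegral_ofReal hIntf (Eventually.of_forall fnn)
  have hreal : (∫ z : E, f z) * Real.Gamma s = π ^ q * (2 * Real.sqrt a * Real.sqrt π) := by
    have := keyEq
    rw [← hof, ← ENNReal.ofReal_mul (integral_nonneg fnn)] at this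
    have h2 : (0:ℝ) ≤ (∫ z : E, f z) * Real.Gamma s :=
      mul_nonneg (integral_nonneg fnn) hΓ.le
    have h3 : (0:ℝ) ≤ π ^ q * (2 * Real.sqrt a * Real.sqrt π) := by positivity
    exact (ENNReal.ofReal_eq_ofReal_iff h2 h3).1 this
  have hsqa : Real.sqrt a = r/2 := by
    rw [ha_def, show r^2/4 = (r/2)^2 from by ring, Real.sqrt_sq (by positivity)]
  have hππ : π ^ q * Real.sqrt π = π ^ s := by
    rw [Real.sqrt_eq_rpow, ← Real.rpow_add Real.pi_pos, hq_def, hs_def]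
    congr 1
    ring
  have hT : π ^ q * (2 * Real.sqrt a * Real.sqrt π) = r * π ^ s := by
    rw [hsqa, show π ^ q * (2 * (r/2) * Real.sqrt π) = r * (π ^ q * Real.sqrt π) from by ring,
      hππ]
  have hval : ∫ z : E, f z = r * cConst p := by
    have hc : cConst p = π ^ s / Real.Gamma s := by rw [cConst, hs_def]
    rw [hT] at hreal
    rw [hc]
    field_simp at hreal ⊢
    linarith [hreal]
  exact ⟨hIntf, hval⟩

end main

end AuxLemmas

/-- For each integer `p ≥ 1` and fixed `r ≥ 0`, `δ ↦ H_p(r;δ)` is continuous and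
increasing on `[0,1]`, with `H_p(r;0) = 0` and `H_p(r;1) = r c_p`. -/
theorem stmt_9 (p : ℕ) (hp : 1 ≤ p) (r : ℝ) (hr : 0 ≤ r) :
    ContinuousOn (fun δ => Hp p r δ) (Set.Icc 0 1) ∧
    MonotoneOn (fun δ => Hp p r δ) (Set.Icc 0 1) ∧
    Hp p r 0 = 0 ∧ Hp p r 1 = r * cConst p := by
  have hp' : 0 < p := hp
  set E := EuclideanSpace ℝ (Fin p)
  set i0 : Fin p := ⟨0, hp'⟩
  set f : E → ℝ := fun z => (1 - Real.cos (r * z i0)) / ‖z‖ ^ (1+p) with hf_def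
  set S : ℝ → Set E := fun δ => {z : E | ‖z‖ ≤ δ ∨ 1 ≤ δ * ‖z‖} with hS_def
  have fnn : ∀ z, 0 ≤ f z := fun z =>
    div_nonneg (by have := Real.cos_le_one (r * z i0); linarith) (by positivity)
  have fmeas : Measurable f := Measurable.div (by simp only [E]; fun_prop) (by fun_prop)
  have hSmeas : ∀ δ, MeasurableSet (S δ) := fun δ => by
    refine MeasurableSet.union ?_ ?_
    · exact (isClosed_le continuous_norm continuous_const).measurableSet
    · exact (isClosed_le continuous_const (continuous_const.mul continuous_norm)).measurableSet
  have hHp : ∀ δ, Hp p r δ = ∫ z in S δ, f z := fun δ => by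
    rw [Hp, dif_pos hp']
  -- the r = 0 case
  rcases eq_or_lt_of_le hr with hr0 | hrpos
  · have hz : ∀ δ, Hp p r δ = 0 := fun δ => by
      rw [hHp δ]
      have : ∀ z : E, f z = 0 := fun z => by
        simp [hf_def, ← hr0]
      simp only [hf_def] at this ⊢
      rw [setIntegral_congr_fun (hSmeas δ) (fun z _ => this z)]
      simp
    refine ⟨?_, ?_, hz 0, ?_⟩
    · have : (fun δ => Hp p r δ) = fun _ => (0:ℝ) := funext hz
      rw [this]; exact continuousOn_const
    · intro x _ y _ _; simp only; rw [hz x, hz y]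
    · rw [hz 1, ← hr0]; ring
  -- main case r > 0
  obtain ⟨hIntf, hval⟩ := main_integral p hp' r hrpos
  have hmono : MonotoneOn (fun δ => Hp p r δ) (Set.Icc 0 1) := by
    intro δ₁ _ δ₂ _ hle
    simp only
    rw [hHp δ₁, hHp δ₂]
    have hsub : S δ₁ ⊆ S δ₂ := by
      intro z hz
      rcases hz with h | h
      · exact Or.inl (le_trans h hle)
      · exact Or.inr (le_trans h (mul_le_mul_of_nonneg_right hle (norm_nonneg z)))
    exact setIntegral_mono_set hIntf.integrableOn (Eventually.of_forall fnn)
      (HasSubset.Subset.eventuallyLE hsub)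
  have hH0 : Hp p r 0 = 0 := by
    rw [hHp 0]
    have hS0 : S 0 = {(0:E)} := by
      ext z
      simp [hS_def, norm_le_zero_iff, E]
    rw [hS0]
    haveI : Nontrivial E := ⟨⟨EuclideanSpace.single i0 1, 0, by
      intro hcontr
      have := congrArg norm hcontr
      rw [EuclideanSpace.norm_single, norm_zero] at this
      norm_num at this⟩⟩
    have : (volume : Measure E).restrict {(0:E)} = 0 :=
      Measure.restrict_eq_zero.2 (measure_singleton 0)
    rw [this, integral_zero_measure]
  have hH1 : Hp p r 1 = r * cConst p := by
    rw [hHp 1]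
    have hS1 : S 1 = Set.univ := by
      ext z
      simpa [hS_def] using le_total ‖z‖ 1
    rw [hS1, Measure.restrict_univ]
    exact hval
  refine ⟨?_, hmono, hH0, hH1⟩
  -- continuity
  haveI : Nontrivial E := ⟨⟨EuclideanSpace.single i0 1, 0, by
    intro hcontr
    have := congrArg norm hcontr
    rw [EuclideanSpace.norm_single, norm_zero] at this
    norm_num at this⟩⟩
  intro δ₀ hδ₀
  have hfun : ∀ δ, Hp p r δ = ∫ z, (S δ).indicator f z := fun δ => by
    rw [hHp δ, integral_indicator (hSmeas δ)]
  have hgood : ∀ᵐ z : E, z ≠ 0 ∧ ‖z‖ ≠ δ₀ ∧ δ₀ * ‖z‖ ≠ 1 := by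
    have h1 : (volume : Measure E) {(0:E)} = 0 := measure_singleton 0
    have h2 : (volume : Measure E) {z : E | ‖z‖ = δ₀} = 0 := by
      have hsp : {z : E | ‖z‖ = δ₀} = Metric.sphere (0:E) δ₀ := by
        ext z; simp [mem_sphere_zero_iff_norm]
      rw [hsp]; exact Measure.addHaar_sphere volume 0 δ₀
    have h3 : (volume : Measure E) {z : E | δ₀ * ‖z‖ = 1} = 0 := by
      by_cases hδ : δ₀ = 0
      · have he : {z : E | δ₀ * ‖z‖ = 1} = ∅ := by
          ext z; simp [hδ]
        simp [he]
      · have hsp : (volume : Measure E) {z : E | ‖z‖ = δ₀⁻¹} = 0 := by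
          have hsp2 : {z : E | ‖z‖ = δ₀⁻¹} = Metric.sphere (0:E) δ₀⁻¹ := by
            ext z; simp [mem_sphere_zero_iff_norm]
          rw [hsp2]; exact Measure.addHaar_sphere volume 0 δ₀⁻¹
        refine measure_mono_null (fun z hz => ?_) hsp
        have hz0 : δ₀ * ‖z‖ = 1 := hz
        exact eq_inv_of_mul_eq_one_left (by rw [mul_comm]; exact hz0)
    filter_upwards [compl_mem_ae_iff.2 h1, compl_mem_ae_iff.2 h2, compl_mem_ae_iff.2 h3]
      with z hz1 hz2 hz3
    exact ⟨by simpa using hz1, hz2, hz3⟩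
  have key : ContinuousWithinAt (fun δ => ∫ z, (S δ).indicator f z) (Set.Icc 0 1) δ₀ := by
    apply tendsto_integral_filter_of_dominated_convergence f
    · exact Eventually.of_forall fun δ => (fmeas.indicator (hSmeas δ)).aestronglyMeasurable
    · refine Eventually.of_forall fun δ => Eventually.of_forall fun z => ?_
      rw [Real.norm_eq_abs, abs_of_nonneg (Set.indicator_nonneg (fun x _ => fnn x) z)]
      exact Set.indicator_le_self' (fun x _ => fnn x) z
    · exact hIntf
    · filter_upwards [hgood] with z hz
      obtain ⟨hz0, hzn, hz1⟩ := hz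
      have hev : ∀ᶠ δ in 𝓝 δ₀, ((S δ).indicator f z = (S δ₀).indicator f z) := by
        by_cases hmem : z ∈ S δ₀
        · have hev' : ∀ᶠ δ in 𝓝 δ₀, z ∈ S δ := by
            rcases hmem with hle | hge
            · have hlt : ‖z‖ < δ₀ := lt_of_le_of_ne hle hzn
              filter_upwards [eventually_gt_nhds hlt] with δ hδ
              exact Or.inl hδ.le
            · have hlt : 1 < δ₀ * ‖z‖ := lt_of_le_of_ne hge (Ne.symm hz1)
              have hcont : Tendsto (fun δ : ℝ => δ * ‖z‖) (𝓝 δ₀) (𝓝 (δ₀ * ‖z‖)) :=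
                (continuous_id.mul continuous_const).continuousAt
              filter_upwards [hcont (Ioi_mem_nhds hlt)] with δ hδ
              exact Or.inr (le_of_lt hδ)
          filter_upwards [hev'] with δ hδ
          rw [Set.indicator_of_mem hδ, Set.indicator_of_mem hmem]
        · have hlt1 : δ₀ < ‖z‖ := by
            rcases lt_or_ge δ₀ ‖z‖ with h | h
            · exact h
            · exact absurd (Or.inl h : z ∈ S δ₀) hmem
          have hlt2 : δ₀ * ‖z‖ < 1 := by
            rcases lt_or_ge (δ₀ * ‖z‖) 1 with h | h
            · exact h
            · exact absurd (Or.inr h : z ∈ S δ₀) hmem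
          have hcont : Tendsto (fun δ : ℝ => δ * ‖z‖) (𝓝 δ₀) (𝓝 (δ₀ * ‖z‖)) :=
            (continuous_id.mul continuous_const).continuousAt
          filter_upwards [eventually_lt_nhds hlt1, hcont (Iio_mem_nhds hlt2)] with δ h₁ h₂
          rw [Set.indicator_of_notMem hmem, Set.indicator_of_notMem]
          intro hc
          rcases hc with hc | hc
          · exact absurd hc (not_le.2 h₁)
          · exact absurd hc (not_le.2 h₂)
      have hev2 : ∀ᶠ δ in nhdsWithin δ₀ (Set.Icc 0 1),
          (S δ₀).indicator f z = (S δ).indicator f z := by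
        filter_upwards [hev.filter_mono nhdsWithin_le_nhds] with δ hδ
        exact hδ.symm
      exact Tendsto.congr' hev2 tendsto_const_nhds
  have heq : (fun δ => Hp p r δ) = fun δ => ∫ z, (S δ).indicator f z := funext hfun
  rw [heq]
  exact key
end

section
/- If the Y-conditional density factors as f_i(x,y) ∝ w_i(x,y) g_X(x) g_Y(y) for each sample i (the null of independence under biased sampling), then the conditional permutation probability P(π | d_n) = ∏_{i=1}^K [∏_j f_i(x_{ij}, y_{i,π_i(j)})] / [Σ_{π'_i} ∏_{j'} f_i(x_{ij'}, y_{i,π'_i(j')})] equals ∏_{i=1}^K (1/per(W_i)) ∏_{j=1}^{n_i} W_i(j, π_i(j)), where W_i(j,j') := w_i(x_{ij}, y_{ij'}) and per(W_i) := Σ_{π'_i ∈ S_{n_i}} ∏_{j'} W_i(j', π'_i(j')) is the permanent; in particular, it does not depend on g_X or g_Y. -/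
/-! Writing `fᵢ(x, y) = (cᵢ g_X(x)) · g_Y(y) · wᵢ(x, y)` exhibits the matrix `(fᵢ(xᵢⱼ, yᵢₖ))ⱼₖ` as a
row-and-column rescaling of `Wᵢ`. Every permutation picks exactly one entry from each row and each
column, so each term `∏ⱼ fᵢ(xᵢⱼ, y_{i,σ(j)})` is the corresponding term of `Wᵢ` times the same
nonzero constant `cᵢⁿ ∏ⱼ g_X(xᵢⱼ) ∏ₖ g_Y(yᵢₖ)`, which cancels in the ratio. -/

open Finset Equiv

section RowColumnScaling

variable {ι R : Type*} [Fintype ι]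

theorem prod_perm_eq_prod_mul_prod_mul_prod [CommMonoid R] {M M' : ι → ι → R} {a b : ι → R}
    (hM : ∀ j k, M' j k = a j * b k * M j k) (σ : Perm ι) :
    ∏ j, M' j (σ j) = (∏ j, a j) * (∏ k, b k) * ∏ j, M j (σ j) := by
  simp only [hM, prod_mul_distrib, Equiv.prod_comp σ b]

theorem div_sum_perm_prod_eq_of_scaling [DecidableEq ι] [Field R] {M M' : ι → ι → R} {a b : ι → R}
    (hM : ∀ j k, M' j k = a j * b k * M j k) (ha : ∏ j, a j ≠ 0) (hb : ∏ k, b k ≠ 0)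
    (π : Perm ι) :
    (∏ j, M' j (π j)) / (∑ σ : Perm ι, ∏ j, M' j (σ j)) =
      (∏ j, M j (π j)) / (∑ σ : Perm ι, ∏ j, M j (σ j)) := by
  simp only [prod_perm_eq_prod_mul_prod_mul_prod hM, ← mul_sum]
  exact mul_div_mul_left _ _ (mul_ne_zero ha hb)

end RowColumnScaling

/-- Under the null of independence with biased sampling, where
`f i (x,y) = c i · w i (x,y) · g_X(x) · g_Y(y)` (`c i > 0` normalizing constants,
`g_X, g_Y` positive at the data points), the conditional permutation probability
`∏ᵢ (∏ⱼ fᵢ(xᵢⱼ, y_{i,πᵢ(j)})) / (∑_{π'ᵢ} ∏ⱼ fᵢ(xᵢⱼ, y_{i,π'ᵢ(j)}))` equals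
`∏ᵢ (∏ⱼ Wᵢ(j, πᵢ(j))) / per(Wᵢ)`, with `Wᵢ(j,j') = wᵢ(xᵢⱼ, yᵢⱼ')` and
`per(Wᵢ) = ∑_{π'ᵢ} ∏ⱼ Wᵢ(j', π'ᵢ(j'))` the permanent; in particular it does not depend
on `g_X` or `g_Y`. -/
theorem stmt_13 {α β : Type*} (K : ℕ) (n : Fin K → ℕ)
    (w : Fin K → α → β → ℝ) (gX : α → ℝ) (gY : β → ℝ) (c : Fin K → ℝ)
    (f : Fin K → α → β → ℝ)
    (hf : ∀ i a b, f i a b = c i * (w i a b * (gX a * gY b)))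
    (x : (i : Fin K) → Fin (n i) → α) (y : (i : Fin K) → Fin (n i) → β)
    (hc : ∀ i, 0 < c i)
    (hgX : ∀ i j, 0 < gX (x i j)) (hgY : ∀ i j, 0 < gY (y i j))
    (π : (i : Fin K) → Equiv.Perm (Fin (n i))) :
    (∏ i, (∏ j, f i (x i j) (y i (π i j))) /
        (∑ π' : Equiv.Perm (Fin (n i)), ∏ j, f i (x i j) (y i (π' j)))) =
      ∏ i, (∏ j, w i (x i j) (y i (π i j))) /
        (∑ π' : Equiv.Perm (Fin (n i)), ∏ j, w i (x i j) (y i (π' j))) := by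
  refine prod_congr rfl fun i _ => ?_
  have hscaling : ∀ j k, f i (x i j) (y i k) =
      c i * gX (x i j) * gY (y i k) * w i (x i j) (y i k) := fun j k => by
    rw [hf]; ring
  exact div_sum_perm_prod_eq_of_scaling (M' := fun j k => f i (x i j) (y i k)) hscaling
    (prod_ne_zero_iff.2 fun j _ => (mul_pos (hc i) (hgX i j)).ne')
    (prod_ne_zero_iff.2 fun k _ => (hgY i k).ne') (π i)
end
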